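/- arXiv:2603.10366 — 6 statements merged into one kernel-verified Lean document; each statement's English description precedes it below -/
import Mathlib

section
/- In the polynomial ring k[x_1, x_2, x_3] over a field k, for any integer a ≥ 1 one has the ideal equality (x_1^2, x_1 x_2, x_2^2, x_3^{a+1}, x_1 x_3^a, x_2 x_3^a) = (x_1, x_2^2, x_3^a) ∩ (x_1^2, x_2, x_3^a) ∩ (x_1, x_2, x_3^{a+1}). -/
/-!
A monomial ideal `span {x^e | e ∈ s}` depends only on the upper closure of `s` in `ℕ³`, and
intersecting monomial ideals amounts to intersecting these upper sets (their `⊔` in `UpperSet`,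
which is ordered by reverse inclusion). The identity therefore reduces to one about exponent
vectors: `d` dominates one of the six exponents on the left iff it dominates an exponent from each
of the three triples on the right, which is a linear case check on `d 0, d 1, d 2`.
-/

open MvPolynomial Finsupp

section MonomialIdeal

variable {σ R : Type*} [CommSemiring R]

theorem mem_span_monomial_image_upperSet {p : MvPolynomial σ R} {U : UpperSet (σ →₀ ℕ)} :
    p ∈ Ideal.span ((monomial · (1 : R)) '' (U : Set (σ →₀ ℕ))) ↔ ∀ d ∈ p.support, d ∈ U := by
  rw [mem_ideal_span_monomial_image]
  exact forall₂_congr fun d _ => ⟨fun ⟨e, he, hed⟩ => U.upper hed he, fun hd => ⟨d, hd, le_rfl⟩⟩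

theorem span_monomial_image_upperClosure (s : Set (σ →₀ ℕ)) :
    Ideal.span ((monomial · (1 : R)) '' (upperClosure s : Set (σ →₀ ℕ))) =
      Ideal.span ((monomial · (1 : R)) '' s) := by
  ext p
  rw [mem_span_monomial_image_upperSet, mem_ideal_span_monomial_image]
  simp only [mem_upperClosure]

theorem span_monomial_image_sup (U V : UpperSet (σ →₀ ℕ)) :
    Ideal.span ((monomial · (1 : R)) '' ((U ⊔ V : UpperSet (σ →₀ ℕ)) : Set (σ →₀ ℕ))) =
      Ideal.span ((monomial · (1 : R)) '' (U : Set (σ →₀ ℕ))) ⊓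
        Ideal.span ((monomial · (1 : R)) '' (V : Set (σ →₀ ℕ))) := by
  ext p
  simp only [Submodule.mem_inf, mem_span_monomial_image_upperSet, UpperSet.mem_sup_iff, forall_and]

end MonomialIdeal

theorem upperClosure_exponents (a : ℕ) :
    upperClosure ({single 0 2, single 0 1 + single 1 1, single 1 2, single 2 (a + 1),
        single 0 1 + single 2 a, single 1 1 + single 2 a} : Set (Fin 3 →₀ ℕ)) =
      upperClosure {single 0 1, single 1 2, single 2 a} ⊔
        upperClosure {single 0 2, single 1 1, single 2 a} ⊔
          upperClosure {single 0 1, single 1 1, single 2 (a + 1)} := by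
  ext d
  simp [mem_upperClosure, le_def, Fin.forall_fin_succ]
  omega

theorem monomial_ideal_intersection_two_general {k : Type*} [Field k] (a : ℕ) :
    Ideal.span {(X 0 : MvPolynomial (Fin 3) k) ^ 2, X 0 * X 1, X 1 ^ 2,
        X 2 ^ (a + 1), X 0 * X 2 ^ a, X 1 * X 2 ^ a} =
      Ideal.span {(X 0 : MvPolynomial (Fin 3) k), X 1 ^ 2, X 2 ^ a} ⊓
        Ideal.span {(X 0 : MvPolynomial (Fin 3) k) ^ 2, X 1, X 2 ^ a} ⊓
          Ideal.span {(X 0 : MvPolynomial (Fin 3) k), X 1, X 2 ^ (a + 1)} := by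
  have h := congrArg (fun U : UpperSet (Fin 3 →₀ ℕ) =>
    Ideal.span ((monomial · (1 : k)) '' (U : Set (Fin 3 →₀ ℕ)))) (upperClosure_exponents a)
  simp only [span_monomial_image_sup, span_monomial_image_upperClosure] at h
  simpa only [Set.image_insert_eq, Set.image_singleton, monomial_single_add,
    ← X_pow_eq_monomial, pow_one] using h

/-- In `k[x₁,x₂,x₃]`, for `a ≥ 1`:
`(x₁², x₁x₂, x₂², x₃^{a+1}, x₁x₃ᵃ, x₂x₃ᵃ) = (x₁, x₂², x₃ᵃ) ∩ (x₁², x₂, x₃ᵃ) ∩ (x₁, x₂, x₃^{a+1})`. -/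
theorem monomial_ideal_intersection_two {k : Type*} [Field k] (a : ℕ) (ha : 1 ≤ a) :
    Ideal.span {(X 0 : MvPolynomial (Fin 3) k) ^ 2, X 0 * X 1, X 1 ^ 2,
        X 2 ^ (a + 1), X 0 * X 2 ^ a, X 1 * X 2 ^ a} =
      Ideal.span {(X 0 : MvPolynomial (Fin 3) k), X 1 ^ 2, X 2 ^ a} ⊓
        Ideal.span {(X 0 : MvPolynomial (Fin 3) k) ^ 2, X 1, X 2 ^ a} ⊓
          Ideal.span {(X 0 : MvPolynomial (Fin 3) k), X 1, X 2 ^ (a + 1)} :=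
  monomial_ideal_intersection_two_general a
end

section
/- In the polynomial ring k[x_1, x_2, x_3] over a field k, for any integer a ≥ 1 one has the ideal equality (x_1^2, x_1 x_2, x_2^2, x_2 x_3^a, x_3^{a+1}) = (x_1, x_2^2, x_3^a) ∩ (x_1^2, x_2, x_3^{a+1}). -/
/-!
A polynomial lies in a monomial ideal iff every exponent in its support dominates the exponent of
some generator. So the equality reduces to a statement about exponent vectors `m ∈ ℕ³`: `m`
dominates one of `(2,0,0), (1,1,0), (0,2,0), (0,1,a), (0,0,a+1)` iff it dominates one of
`(1,0,0), (0,2,0), (0,0,a)` and one of `(2,0,0), (0,1,0), (0,0,a+1)`, which is linear arithmetic.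
-/

open MvPolynomial Finsupp

namespace MvPolynomial

variable {σ R : Type*} [CommSemiring R]

theorem span_monomial_image_eq_inf {S T U : Set (σ →₀ ℕ)}
    (h : ∀ m, (∃ s ∈ S, s ≤ m) ↔ (∃ t ∈ T, t ≤ m) ∧ ∃ u ∈ U, u ≤ m) :
    Ideal.span ((fun s => monomial s (1 : R)) '' S) =
      Ideal.span ((fun s => monomial s 1) '' T) ⊓ Ideal.span ((fun s => monomial s 1) '' U) := by
  ext x
  simp only [Ideal.mem_inf, mem_ideal_span_monomial_image, h, forall_and]

end MvPolynomial

theorem exists_exponent_le_iff_and (a : ℕ) (m : Fin 3 →₀ ℕ) :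
    (∃ s ∈ ({single 0 2, single 0 1 + single 1 1, single 1 2, single 1 1 + single 2 a,
        single 2 (a + 1)} : Set (Fin 3 →₀ ℕ)), s ≤ m) ↔
      (∃ t ∈ ({single 0 1, single 1 2, single 2 a} : Set (Fin 3 →₀ ℕ)), t ≤ m) ∧
        ∃ u ∈ ({single 0 2, single 1 1, single 2 (a + 1)} : Set (Fin 3 →₀ ℕ)), u ≤ m := by
  simp only [Set.mem_insert_iff, Set.mem_singleton_iff, exists_eq_or_imp, exists_eq_left, le_def,
    Fin.forall_fin_succ, Fin.succ_zero_eq_one, Fin.succ_one_eq_two, IsEmpty.forall_iff,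
    Finsupp.add_apply, single_apply, Fin.reduceEq, if_true, if_false, and_true]
  omega

theorem monomial_ideal_intersection_three_general {k : Type*} [Field k] (a : ℕ) :
    Ideal.span {(X 0 : MvPolynomial (Fin 3) k) ^ 2, X 0 * X 1, X 1 ^ 2,
        X 1 * X 2 ^ a, X 2 ^ (a + 1)} =
      Ideal.span {(X 0 : MvPolynomial (Fin 3) k), X 1 ^ 2, X 2 ^ a} ⊓
        Ideal.span {(X 0 : MvPolynomial (Fin 3) k) ^ 2, X 1, X 2 ^ (a + 1)} := by
  convert span_monomial_image_eq_inf (R := k) (exists_exponent_le_iff_and a) using 2 <;>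
    simp only [Set.image_insert_eq, Set.image_singleton, X, monomial_pow, monomial_mul, one_pow,
      mul_one, smul_single, smul_eq_mul]

/-- In `k[x₁,x₂,x₃]`, for `a ≥ 1`:
`(x₁², x₁x₂, x₂², x₂x₃ᵃ, x₃^{a+1}) = (x₁, x₂², x₃ᵃ) ∩ (x₁², x₂, x₃^{a+1})`. -/
theorem monomial_ideal_intersection_three {k : Type*} [Field k] (a : ℕ) (ha : 1 ≤ a) :
    Ideal.span {(X 0 : MvPolynomial (Fin 3) k) ^ 2, X 0 * X 1, X 1 ^ 2,
        X 1 * X 2 ^ a, X 2 ^ (a + 1)} =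
      Ideal.span {(X 0 : MvPolynomial (Fin 3) k), X 1 ^ 2, X 2 ^ a} ⊓
        Ideal.span {(X 0 : MvPolynomial (Fin 3) k) ^ 2, X 1, X 2 ^ (a + 1)} :=
  monomial_ideal_intersection_three_general a
end

section
/- Let R = k[x_0,...,x_4], a ≥ 3, and g_1 = x_2^2 - x_1 x_3, g_2 = x_1 x_2 - x_0 x_3, g_3 = x_3^a - x_0^{a-1} x_4, g_4 = x_1^2 - x_0 x_2. Then (g_1, g_2) : g_4 = (x_2, x_3) and also (g_1, g_2) : g_4^2 = (x_2, x_3). -/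
/-!
The ideal `P = (x₂, x₃)` is prime (it is the kernel of `x₂, x₃ ↦ 0`) and contains `g₁, g₂`, while
`g₄ ∉ P` because `g₄ ≡ x₁² mod P`. The identities `x₂ g₄ = -x₀ g₁ + x₁ g₂` and
`x₃ g₄ = -x₁ g₁ + x₂ g₂` give `P g₄ ⊆ (g₁, g₂)`. Hence `P ⊆ (g₁, g₂) : g₄ⁿ`, and conversely
`f g₄ⁿ ∈ (g₁, g₂) ⊆ P` forces `f ∈ P` by primality.
-/

open MvPolynomial

namespace MvPolynomial

variable {σ R : Type*} [CommRing R]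

noncomputable def zeroVars (s : Set σ) [DecidablePred (· ∈ s)] :
    MvPolynomial σ R →ₐ[R] MvPolynomial σ R :=
  aeval fun i => if i ∈ s then 0 else X i

section zeroVars

variable (s : Set σ) [DecidablePred (· ∈ s)]

theorem X_sub_zeroVars_X_mem_span_X_image (i : σ) :
    X i - zeroVars s (X i) ∈ Ideal.span (X '' s : Set (MvPolynomial σ R)) := by
  by_cases hi : i ∈ s
  · simpa [zeroVars, hi] using Ideal.subset_span (Set.mem_image_of_mem X hi)
  · simp [zeroVars, hi]

theorem sub_zeroVars_mem_span_X_image (f : MvPolynomial σ R) :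
    f - zeroVars s f ∈ Ideal.span (X '' s : Set (MvPolynomial σ R)) := by
  set J := Ideal.span (X '' s : Set (MvPolynomial σ R))
  induction f using MvPolynomial.induction_on with
  | C c => simp
  | add p q hp hq =>
    rw [map_add, add_sub_add_comm]
    exact J.add_mem hp hq
  | mul_X p i hp =>
    have hsplit : p * X i - zeroVars s (p * X i) =
        (p - zeroVars s p) * X i + zeroVars s p * (X i - zeroVars s (X i)) := by
      rw [map_mul]; ring
    rw [hsplit]
    exact J.add_mem (J.mul_mem_right _ hp)
      (J.mul_mem_left _ (X_sub_zeroVars_X_mem_span_X_image s i))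

theorem ker_zeroVars :
    RingHom.ker (zeroVars s : MvPolynomial σ R →ₐ[R] MvPolynomial σ R) =
      Ideal.span (X '' s) := by
  refine le_antisymm (fun f hf => ?_) ?_
  · simpa [(RingHom.mem_ker).1 hf] using sub_zeroVars_mem_span_X_image s f
  · rw [Ideal.span_le]
    rintro _ ⟨i, hi, rfl⟩
    simp [RingHom.mem_ker, zeroVars, hi]

end zeroVars

theorem isPrime_span_X_image [IsDomain R] (s : Set σ) :
    (Ideal.span (X '' s : Set (MvPolynomial σ R))).IsPrime := by
  classical
  rw [← ker_zeroVars s]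
  exact RingHom.ker_isPrime _

end MvPolynomial

theorem Ideal.colon_span_singleton_pow_eq_of_isPrime {R : Type*} [CommRing R]
    {I P : Ideal R} [P.IsPrime] {g : R} (hIP : I ≤ P) (hg : g ∉ P)
    (hPg : ∀ p ∈ P, p * g ∈ I) {n : ℕ} (hn : n ≠ 0) :
    I.colon (Ideal.span {g ^ n} : Ideal R) = P := by
  refine le_antisymm (fun f hf => ?_) (fun p hp => ?_)
  · rw [Ideal.mem_colon_span_singleton] at hf
    exact ((‹P.IsPrime›.mem_or_mem (hIP hf)).resolve_right
      (fun h => hg (‹P.IsPrime›.mem_of_pow_mem n h)))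
  · rw [Ideal.mem_colon_span_singleton]
    obtain ⟨m, rfl⟩ := Nat.exists_eq_succ_of_ne_zero hn
    rw [pow_succ', ← mul_assoc]
    exact I.mul_mem_right _ (hPg p hp)

theorem colon_g4_identities_general {k : Type*} [Field k] :
    (Ideal.span {(X 2 : MvPolynomial (Fin 5) k) ^ 2 - X 1 * X 3,
        X 1 * X 2 - X 0 * X 3}).colon (Ideal.span {X 1 ^ 2 - X 0 * X 2} : Ideal (MvPolynomial (Fin 5) k)) =
      Ideal.span {(X 2 : MvPolynomial (Fin 5) k), X 3} ∧
    (Ideal.span {(X 2 : MvPolynomial (Fin 5) k) ^ 2 - X 1 * X 3,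
        X 1 * X 2 - X 0 * X 3}).colon (Ideal.span {(X 1 ^ 2 - X 0 * X 2) ^ 2} : Ideal (MvPolynomial (Fin 5) k)) =
      Ideal.span {(X 2 : MvPolynomial (Fin 5) k), X 3} := by
  classical
  set g4 : MvPolynomial (Fin 5) k := X 1 ^ 2 - X 0 * X 2
  set I : Ideal (MvPolynomial (Fin 5) k) := Ideal.span {X 2 ^ 2 - X 1 * X 3, X 1 * X 2 - X 0 * X 3}
  set P : Ideal (MvPolynomial (Fin 5) k) := Ideal.span {X 2, X 3}
  have hP_eq : P = Ideal.span (X '' {2, 3}) := by rw [Set.image_pair]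
  have : P.IsPrime := hP_eq ▸ isPrime_span_X_image _
  have hIP : I ≤ P := by
    rw [Ideal.span_le, Set.insert_subset_iff, Set.singleton_subset_iff]
    exact ⟨Ideal.mem_span_pair.2 ⟨X 2, -X 1, by ring⟩, Ideal.mem_span_pair.2 ⟨X 1, -X 0, by ring⟩⟩
  have hg4 : g4 ∉ P := by
    rw [hP_eq, ← ker_zeroVars, RingHom.mem_ker]
    simp [g4, zeroVars]
  have hPg4 : ∀ p ∈ P, p * g4 ∈ I := by
    intro p hp
    obtain ⟨c, d, rfl⟩ := Ideal.mem_span_pair.1 hp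
    exact Ideal.mem_span_pair.2 ⟨-c * X 0 - d * X 1, c * X 1 + d * X 2, by ring⟩
  have hcolon {n : ℕ} (hn : n ≠ 0) : I.colon (Ideal.span {g4 ^ n} : Ideal _) = P :=
    Ideal.colon_span_singleton_pow_eq_of_isPrime hIP hg4 hPg4 hn
  exact ⟨by simpa using hcolon one_ne_zero, hcolon two_ne_zero⟩

/-- For `a ≥ 3` in `k[x₀,...,x₄]` with `g₁ = x₂² - x₁x₃`, `g₂ = x₁x₂ - x₀x₃`,
`g₄ = x₁² - x₀x₂`: `(g₁,g₂) : g₄ = (x₂,x₃)` and `(g₁,g₂) : g₄² = (x₂,x₃)`. -/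
theorem colon_g4_identities {k : Type*} [Field k] (a : ℕ) (ha : 3 ≤ a) :
    (Ideal.span {(X 2 : MvPolynomial (Fin 5) k) ^ 2 - X 1 * X 3,
        X 1 * X 2 - X 0 * X 3}).colon (Ideal.span {X 1 ^ 2 - X 0 * X 2} : Ideal (MvPolynomial (Fin 5) k)) =
      Ideal.span {(X 2 : MvPolynomial (Fin 5) k), X 3} ∧
    (Ideal.span {(X 2 : MvPolynomial (Fin 5) k) ^ 2 - X 1 * X 3,
        X 1 * X 2 - X 0 * X 3}).colon (Ideal.span {(X 1 ^ 2 - X 0 * X 2) ^ 2} : Ideal (MvPolynomial (Fin 5) k)) =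
      Ideal.span {(X 2 : MvPolynomial (Fin 5) k), X 3} :=
  colon_g4_identities_general
end

section
/- Let R = k[x_0,...,x_4], a ≥ 3, and g_1 = x_2^2 - x_1 x_3, g_2 = x_1 x_2 - x_0 x_3, g_3 = x_3^a - x_0^{a-1} x_4, g_4 = x_1^2 - x_0 x_2. Then g_1, g_2, g_3, g_4 form a d-sequence in R: for all 0 ≤ i ≤ 3 and all k ≥ i+1, ((g_1,...,g_i) : g_{i+1} g_k) = ((g_1,...,g_i) : g_k). -/
/-!
For `i ≤ 2` the ideal `Iᵢ = (g₁, …, gᵢ)` is an intersection of prime ideals none of which contains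
`gᵢ₊₁`, so `Iᵢ : gᵢ₊₁ f = Iᵢ : f` for every `f`. Indeed `(0)` is prime, `(g₁)` is the kernel of
the parametrization `(x₀, x₁², x₁x₃, x₃², x₄)` of the quadric cone, and
`(g₁, g₂) = (x₂, x₃) ∩ (g₁, g₂, g₄)`, where `(g₁, g₂, g₄)` is the kernel of the parametrization
`(x₁³, x₁²x₃, x₁x₃², x₃³, x₄)` of the cone over the twisted cubic. Both kernels are computed by
rewriting monomials with binomials of the ideal until their exponents lie in a set on which the
parametrization is injective on monomials.

For `i = 3` only `g₄` remains. If `r g₄² ∈ (g₁, g₂, g₃)`, setting `x₂ = x₃ = 0` shows that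
`x₀^(a-1) x₄` divides `r(x₀, x₁, 0, 0, x₄)`. Since `(x₂, x₃) g₄ ⊆ (g₁, g₂)` and
`x₀^(a-1) x₄ g₄ ≡ x₃^a g₄ ≡ 0` modulo `(g₁, g₂, g₃)`, it follows that `r g₄ ∈ (g₁, g₂, g₃)`.
-/

open MvPolynomial

theorem Ideal.IsPrime.colon_span_singleton_mul_of_notMem {R : Type*} [CommRing R] {P : Ideal R}
    (hP : P.IsPrime) {x : R} (hx : x ∉ P) (f : R) :
    P.colon (Ideal.span {x * f}) = P.colon (Ideal.span {f}) := by
  ext r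
  simp only [Ideal.mem_colon_span_singleton, mul_left_comm r x f,
    hP.mul_mem_iff_mem_or_mem, hx, false_or]

theorem Finsupp.sum_nsmul_apply {σ τ : Type*} [Fintype σ] (w : σ → τ →₀ ℕ) (d : σ →₀ ℕ)
    (j : τ) : (d.sum fun i n => n • w i) j = ∑ i, d i * w i j := by
  rw [Finsupp.sum_fintype _ _ (by simp)]
  simp [Finsupp.finsetSum_apply]

namespace MvPolynomial

variable {σ τ R : Type*} [CommRing R]

theorem eq_zero_of_map_eq_zero_of_injOn {F : Type*}
    [FunLike F (MvPolynomial σ R) (MvPolynomial τ R)]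
    [AddMonoidHomClass F (MvPolynomial σ R) (MvPolynomial τ R)] (φ : F)
    {e : (σ →₀ ℕ) → (τ →₀ ℕ)} (hφ : ∀ d c, φ (monomial d c) = monomial (e d) c)
    {N : Set (σ →₀ ℕ)} (he : Set.InjOn e N) {q : MvPolynomial σ R} (hq : ∀ d ∈ q.support, d ∈ N)
    (h : φ q = 0) : q = 0 := by
  classical
  have hsum : φ q = ∑ d ∈ q.support, monomial (e d) (coeff d q) := by
    conv_lhs => rw [q.as_sum]
    simp only [map_sum, hφ]
  ext d
  rw [coeff_zero]
  by_contra hd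
  have hcoeff := congrArg (coeff (e d)) h
  rw [hsum, coeff_sum, Finset.sum_eq_single_of_mem d (mem_support_iff.2 hd), coeff_monomial,
    if_pos rfl, coeff_zero] at hcoeff
  · exact hd hcoeff
  · intro b hb hbd
    rw [coeff_monomial, if_neg fun h => hbd (he (hq b hb) (hq d (mem_support_iff.2 hd)) h)]

theorem exists_monomial_sub_mem_of_reduce {I : Ideal (MvPolynomial σ R)} {N : Set (σ →₀ ℕ)}
    {μ : (σ →₀ ℕ) → ℕ}
    (hred : ∀ d ∉ N, ∃ u v, u ≤ d ∧ monomial u 1 - monomial v 1 ∈ I ∧ μ (d - u + v) < μ d)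
    (d : σ →₀ ℕ) (c : R) :
    ∃ q : MvPolynomial σ R, (∀ e ∈ q.support, e ∈ N) ∧ monomial d c - q ∈ I := by
  induction hn : μ d using Nat.strong_induction_on generalizing d with
  | _ n ih =>
    by_cases hd : d ∈ N
    · refine ⟨monomial d c, fun e he => ?_, by simp⟩
      rwa [Finset.mem_singleton.1 (support_monomial_subset he)]
    obtain ⟨u, v, hud, huv, hμ⟩ := hred d hd
    obtain ⟨q, hq, hdq⟩ := ih _ (hn ▸ hμ) (d - u + v) rfl
    refine ⟨q, hq, ?_⟩
    have hstep : monomial d c - monomial (d - u + v) c =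
        monomial (d - u) c * (monomial u 1 - monomial v 1) := by
      rw [mul_sub, monomial_mul, monomial_mul, mul_one, tsub_add_cancel_of_le hud]
    rw [← sub_add_sub_cancel _ (monomial (d - u + v) c), hstep]
    exact I.add_mem (I.mul_mem_left _ huv) hdq

theorem exists_sub_mem_of_reduce {I : Ideal (MvPolynomial σ R)} {N : Set (σ →₀ ℕ)}
    {μ : (σ →₀ ℕ) → ℕ}
    (hred : ∀ d ∉ N, ∃ u v, u ≤ d ∧ monomial u 1 - monomial v 1 ∈ I ∧ μ (d - u + v) < μ d)
    (p : MvPolynomial σ R) : ∃ q : MvPolynomial σ R, (∀ e ∈ q.support, e ∈ N) ∧ p - q ∈ I := by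
  classical
  induction p using MvPolynomial.induction_on' with
  | monomial d c => exact exists_monomial_sub_mem_of_reduce hred d c
  | add p p' hp hp' =>
    obtain ⟨q, hq, hpq⟩ := hp
    obtain ⟨q', hq', hpq'⟩ := hp'
    refine ⟨q + q', fun e he => ?_, ?_⟩
    · rcases Finset.mem_union.1 (support_add he) with h | h
      exacts [hq e h, hq' e h]
    · rw [add_sub_add_comm]
      exact I.add_mem hpq hpq'

theorem ker_eq_of_reduce {F : Type*} [FunLike F (MvPolynomial σ R) (MvPolynomial τ R)]
    [RingHomClass F (MvPolynomial σ R) (MvPolynomial τ R)] (φ : F)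
    {e : (σ →₀ ℕ) → (τ →₀ ℕ)} (hφ : ∀ d c, φ (monomial d c) = monomial (e d) c)
    (I : Ideal (MvPolynomial σ R)) (hI : I ≤ RingHom.ker φ) (N : Set (σ →₀ ℕ)) (he : Set.InjOn e N)
    (μ : (σ →₀ ℕ) → ℕ)
    (hred : ∀ d ∉ N, ∃ u v, u ≤ d ∧ monomial u 1 - monomial v 1 ∈ I ∧ μ (d - u + v) < μ d) :
    RingHom.ker φ = I := by
  refine le_antisymm (fun p hp => ?_) hI
  obtain ⟨q, hq, hpq⟩ := exists_sub_mem_of_reduce hred p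
  have hq0 : φ q = 0 := by
    simpa [RingHom.mem_ker.1 hp] using hI hpq
  rwa [eq_zero_of_map_eq_zero_of_injOn φ hφ he hq hq0, sub_zero] at hpq

theorem aeval_monomial_eq_monomial {f : σ → MvPolynomial τ R} {w : σ → τ →₀ ℕ}
    (hf : ∀ i, f i = monomial (w i) 1) (d : σ →₀ ℕ) (c : R) :
    aeval f (monomial d c) = monomial (d.sum fun i n => n • w i) c := by
  obtain rfl : f = fun i => monomial (w i) 1 := _root_.funext hf
  rw [aeval_monomial, monomial_finsupp_sum_index, algebraMap_eq]
  simp [monomial_pow]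

theorem isRelPrime_X_X [IsDomain R] {i j : σ} (hij : i ≠ j) :
    IsRelPrime (X i : MvPolynomial σ R) (X j) :=
  X_prime.irreducible.isRelPrime_iff_not_dvd.2 (by simpa using hij)

end MvPolynomial

namespace DSequence

open Finsupp Ideal

variable (k : Type*) [Field k]

noncomputable def g₁ : MvPolynomial (Fin 5) k := X 2 ^ 2 - X 1 * X 3
noncomputable def g₂ : MvPolynomial (Fin 5) k := X 1 * X 2 - X 0 * X 3
noncomputable def g₃ (a : ℕ) : MvPolynomial (Fin 5) k := X 3 ^ a - X 0 ^ (a - 1) * X 4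
noncomputable def g₄ : MvPolynomial (Fin 5) k := X 1 ^ 2 - X 0 * X 2

noncomputable def killX₂X₃ : MvPolynomial (Fin 5) k →ₐ[k] MvPolynomial (Fin 5) k :=
  aeval ![X 0, X 1, 0, 0, X 4]

noncomputable def quadricParam : MvPolynomial (Fin 5) k →ₐ[k] MvPolynomial (Fin 5) k :=
  aeval ![X 0, X 1 ^ 2, X 1 * X 3, X 3 ^ 2, X 4]

noncomputable def twistedCubicParam : MvPolynomial (Fin 5) k →ₐ[k] MvPolynomial (Fin 5) k :=
  aeval ![X 1 ^ 3, X 1 ^ 2 * X 3, X 1 * X 3 ^ 2, X 3 ^ 3, X 4]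

theorem sub_killX₂X₃_mem (p : MvPolynomial (Fin 5) k) :
    p - killX₂X₃ k p ∈ span {X 2, X 3} := by
  induction p using MvPolynomial.induction_on with
  | C c => simp [killX₂X₃]
  | add p q hp hq => simpa only [map_add, add_sub_add_comm] using add_mem hp hq
  | mul_X p i hp =>
    have hX₂ : X 2 ∈ span {(X 2 : MvPolynomial (Fin 5) k), X 3} := subset_span (by simp)
    have hX₃ : X 3 ∈ span {(X 2 : MvPolynomial (Fin 5) k), X 3} := subset_span (by simp)
    have hXi : X i - killX₂X₃ k (X i) ∈ span {(X 2 : MvPolynomial (Fin 5) k), X 3} := by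
      fin_cases i <;> simp [killX₂X₃, hX₂, hX₃]
    rw [map_mul, show p * X i - killX₂X₃ k p * killX₂X₃ k (X i) =
      (p - killX₂X₃ k p) * X i + killX₂X₃ k p * (X i - killX₂X₃ k (X i)) by ring]
    exact add_mem (mul_mem_right _ _ hp) (mul_mem_left _ _ hXi)

theorem ker_killX₂X₃ : RingHom.ker (killX₂X₃ k) = span {X 2, X 3} := by
  refine le_antisymm (fun p hp => ?_) ?_
  · simpa [RingHom.mem_ker.1 hp] using sub_killX₂X₃_mem k p
  · rw [span_le]
    rintro _ (rfl | rfl) <;> simp [killX₂X₃]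

theorem ker_quadricParam : RingHom.ker (quadricParam k) = span {g₁ k} := by
  let w : Fin 5 → Fin 5 →₀ ℕ :=
    ![single 0 1, single 1 2, single 1 1 + single 3 1, single 3 2, single 4 1]
  refine ker_eq_of_reduce _ (aeval_monomial_eq_monomial (w := w) ?_) _ ?_ {d | d 2 ≤ 1} ?_
    (fun d => d 2) ?_
  · intro i
    fin_cases i <;> simp [w, X, monomial_mul, monomial_pow, smul_single]
  · rw [span_le, Set.singleton_subset_iff, SetLike.mem_coe, RingHom.mem_ker]
    simp only [g₁, map_sub, map_mul, map_pow, aeval_X, Matrix.cons_val]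
    ring
  · intro d hd d' hd' h
    have h0 := DFunLike.congr_fun h 0
    have h1 := DFunLike.congr_fun h 1
    have h3 := DFunLike.congr_fun h 3
    have h4 := DFunLike.congr_fun h 4
    simp only [sum_nsmul_apply, Fin.sum_univ_five, w] at h0 h1 h3 h4
    simp only [Matrix.cons_val, Finsupp.coe_add, Pi.add_apply, single_eq_same, single_eq_of_ne,
      ne_eq, Fin.reduceEq, not_false_eq_true, mul_one, mul_zero, add_zero, zero_add] at h0 h1 h3 h4
    simp only [Set.mem_ofPred_eq] at hd hd'
    ext i
    fin_cases i <;> simp only [Fin.zero_eta, Fin.mk_one, Fin.reduceFinMk] <;> omega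
  · intro d hd
    simp only [Set.mem_ofPred_eq, not_le] at hd
    refine ⟨single 2 2, single 1 1 + single 3 1, single_le_iff.2 hd, subset_span ?_, ?_⟩
    · simp [g₁, X, monomial_mul, monomial_pow, smul_single]
    · simp only [Finsupp.coe_add, coe_tsub, Pi.add_apply, Pi.sub_apply, single_eq_same,
        single_eq_of_ne, ne_eq, Fin.reduceEq, not_false_eq_true, add_zero]
      omega

theorem ker_twistedCubicParam :
    RingHom.ker (twistedCubicParam k) = span {g₁ k, g₂ k, g₄ k} := by
  let w : Fin 5 → Fin 5 →₀ ℕ :=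
    ![single 1 3, single 1 2 + single 3 1, single 1 1 + single 3 2, single 3 3, single 4 1]
  refine ker_eq_of_reduce _ (aeval_monomial_eq_monomial (w := w) ?_) _ ?_
    {d | d 1 + d 2 ≤ 1} ?_ (fun d => d 1 + d 2) ?_
  · intro i
    fin_cases i <;> simp [w, X, monomial_mul, monomial_pow, smul_single]
  · rw [span_le]
    rintro _ (rfl | rfl | rfl) <;>
      simp only [g₁, g₂, g₄, SetLike.mem_coe, RingHom.mem_ker, map_sub, map_mul, map_pow, aeval_X,
        Matrix.cons_val] <;> ring
  · intro d hd d' hd' h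
    have h1 := DFunLike.congr_fun h 1
    have h3 := DFunLike.congr_fun h 3
    have h4 := DFunLike.congr_fun h 4
    simp only [sum_nsmul_apply, Fin.sum_univ_five, w] at h1 h3 h4
    simp only [Matrix.cons_val, Finsupp.coe_add, Pi.add_apply, single_eq_same, single_eq_of_ne,
      ne_eq, Fin.reduceEq, not_false_eq_true, mul_one, mul_zero, add_zero, zero_add] at h1 h3 h4
    simp only [Set.mem_ofPred_eq] at hd hd'
    ext i
    fin_cases i <;> simp only [Fin.zero_eta, Fin.mk_one, Fin.reduceFinMk] <;> omega
  · intro d hd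
    simp only [Set.mem_ofPred_eq, not_le] at hd
    by_cases h2 : 2 ≤ d 2
    · refine ⟨single 2 2, single 1 1 + single 3 1, single_le_iff.2 h2, subset_span ?_, ?_⟩
      · simp [g₁, X, monomial_mul, monomial_pow, smul_single]
      · simp only [Finsupp.coe_add, coe_tsub, Pi.add_apply, Pi.sub_apply, single_eq_same,
          single_eq_of_ne, ne_eq, Fin.reduceEq, not_false_eq_true, add_zero, tsub_zero]
        omega
    by_cases h1 : 2 ≤ d 1
    · refine ⟨single 1 2, single 0 1 + single 2 1, single_le_iff.2 h1, subset_span ?_, ?_⟩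
      · simp [g₄, X, monomial_mul, monomial_pow, smul_single]
      · simp only [Finsupp.coe_add, coe_tsub, Pi.add_apply, Pi.sub_apply, single_eq_same,
          single_eq_of_ne, ne_eq, Fin.reduceEq, not_false_eq_true, add_zero, zero_add, tsub_zero]
        omega
    · refine ⟨single 1 1 + single 2 1, single 0 1 + single 3 1, ?_, subset_span ?_, ?_⟩
      · intro i
        fin_cases i <;> simp only [Fin.zero_eta, Fin.mk_one, Fin.reduceFinMk, Finsupp.coe_add,
          Pi.add_apply, single_eq_same, single_eq_of_ne, ne_eq, Fin.reduceEq, not_false_eq_true,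
          add_zero, zero_add, zero_le] <;> omega
      · simp [g₂, X, monomial_mul]
      · simp only [Finsupp.coe_add, coe_tsub, Pi.add_apply, Pi.sub_apply, single_eq_same,
          single_eq_of_ne, ne_eq, Fin.reduceEq, not_false_eq_true, add_zero, zero_add]
        omega

theorem mul_g₄_mem_of_mem {x : MvPolynomial (Fin 5) k} (hx : x ∈ span {X 2, X 3}) :
    x * g₄ k ∈ span {g₁ k, g₂ k} := by
  obtain ⟨A, B, rfl⟩ := mem_span_pair.1 hx
  exact mem_span_pair.2 ⟨-A * X 0 - B * X 1, A * X 1 + B * X 2, by simp only [g₁, g₂, g₄]; ring⟩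

theorem span_g₁_g₂_le_ker_killX₂X₃ : span {g₁ k, g₂ k} ≤ RingHom.ker (killX₂X₃ k) := by
  rw [span_le]
  rintro _ (rfl | rfl) <;> simp [g₁, g₂, killX₂X₃]

theorem killX₂X₃_g₄ : killX₂X₃ k (g₄ k) = X 1 ^ 2 := by
  simp [g₄, killX₂X₃]

theorem span_g₁_g₂_eq_ker_inf_ker :
    span {g₁ k, g₂ k} = RingHom.ker (killX₂X₃ k) ⊓ RingHom.ker (twistedCubicParam k) := by
  refine le_antisymm ?_ fun h ⟨hP, hQ⟩ => ?_
  · rw [ker_twistedCubicParam]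
    exact le_inf (span_g₁_g₂_le_ker_killX₂X₃ k) (span_mono (by simp [Set.insert_subset_iff]))
  · rw [SetLike.mem_coe, ker_twistedCubicParam, Set.pair_comm, Set.insert_comm] at hQ
    obtain ⟨u, z, hz, rfl⟩ := mem_span_insert.1 hQ
    have hu : killX₂X₃ k u = 0 := by
      have h := RingHom.mem_ker.1 hP
      rw [map_add, map_mul, killX₂X₃_g₄, RingHom.mem_ker.1 (span_g₁_g₂_le_ker_killX₂X₃ k hz),
        add_zero] at h
      exact (mul_eq_zero.1 h).resolve_right (pow_ne_zero _ (X_ne_zero _))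
    rw [← RingHom.mem_ker, ker_killX₂X₃] at hu
    exact add_mem (mul_g₄_mem_of_mem k hu) hz

theorem bot_colon_g₁_mul (f : MvPolynomial (Fin 5) k) :
    (⊥ : Ideal (MvPolynomial (Fin 5) k)).colon (span {g₁ k * f}) =
      (⊥ : Ideal _).colon (span {f}) := by
  refine isPrime_bot.colon_span_singleton_mul_of_notMem (fun h => ?_) f
  simpa [g₁] using congrArg (eval ![0, 0, 1, 0, 0]) (mem_bot.1 h)

theorem span_g₁_colon_g₂_mul (f : MvPolynomial (Fin 5) k) :
    (span {g₁ k}).colon (span {g₂ k * f}) = (span {g₁ k}).colon (span {f}) := by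
  rw [← ker_quadricParam]
  refine (RingHom.ker_isPrime _).colon_span_singleton_mul_of_notMem (fun h => ?_) f
  simpa [g₂, quadricParam] using congrArg (eval ![0, 1, 0, 1, 0]) (RingHom.mem_ker.1 h)

theorem span_g₁_g₂_colon_g₃_mul {a : ℕ} (ha : a ≠ 0) (f : MvPolynomial (Fin 5) k) :
    (span {g₁ k, g₂ k}).colon (span {g₃ k a * f}) = (span {g₁ k, g₂ k}).colon (span {f}) := by
  have hP : g₃ k a ∉ RingHom.ker (killX₂X₃ k) := fun h => by
    simpa [g₃, killX₂X₃, ha] using congrArg (eval 1) (RingHom.mem_ker.1 h)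
  have hQ : g₃ k a ∉ RingHom.ker (twistedCubicParam k) := fun h => by
    simpa [g₃, twistedCubicParam] using congrArg (eval ![0, 0, 0, 1, 0]) (RingHom.mem_ker.1 h)
  rw [span_g₁_g₂_eq_ker_inf_ker, Submodule.inf_colon, Submodule.inf_colon,
    (RingHom.ker_isPrime _).colon_span_singleton_mul_of_notMem hP,
    (RingHom.ker_isPrime _).colon_span_singleton_mul_of_notMem hQ]

theorem span_g₁_g₂_g₃_le_comap_killX₂X₃ {a : ℕ} (ha : a ≠ 0) :
    span {g₁ k, g₂ k, g₃ k a} ≤ (span {X 0 ^ (a - 1) * X 4}).comap (killX₂X₃ k) := by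
  rw [span_le]
  rintro _ (rfl | rfl | rfl) <;> simp [g₁, g₂, g₃, killX₂X₃, ha]

theorem mul_g₄_mem_span_g₁_g₂_g₃ {a : ℕ} (ha : a ≠ 0) :
    X 0 ^ (a - 1) * X 4 * g₄ k ∈ span {g₁ k, g₂ k, g₃ k a} := by
  have hX₃ : X 3 * g₄ k ∈ span {g₁ k, g₂ k} := mul_g₄_mem_of_mem k (subset_span (by simp))
  have hI : span {g₁ k, g₂ k} ≤ span {g₁ k, g₂ k, g₃ k a} :=
    span_mono (by simp [Set.insert_subset_iff])
  have key : X 0 ^ (a - 1) * X 4 * g₄ k = X 3 ^ (a - 1) * (X 3 * g₄ k) - g₄ k * g₃ k a := by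
    rw [g₃, ← Nat.sub_one_add_one ha, pow_succ]
    simp only [Nat.add_sub_cancel]
    ring
  rw [key]
  exact sub_mem (mul_mem_left _ _ (hI hX₃)) (mul_mem_left _ _ (subset_span (by simp)))

theorem span_g₁_g₂_g₃_colon_g₄_sq {a : ℕ} (ha : a ≠ 0) :
    (span {g₁ k, g₂ k, g₃ k a}).colon (span {g₄ k * g₄ k}) =
      (span {g₁ k, g₂ k, g₃ k a}).colon (span {g₄ k}) := by
  refine le_antisymm (fun r hr => ?_)
    (Submodule.colon_mono le_rfl (span_singleton_le_span_singleton.2 (dvd_mul_left _ _)))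
  rw [mem_colon_span_singleton] at hr ⊢
  obtain ⟨t, ht⟩ : X 0 ^ (a - 1) * X 4 ∣ killX₂X₃ k r := by
    have h := mem_span_singleton.1 (span_g₁_g₂_g₃_le_comap_killX₂X₃ k ha hr)
    rw [map_mul, map_mul, killX₂X₃_g₄] at h
    refine IsRelPrime.dvd_of_dvd_mul_right ?_ h
    rw [← pow_add]
    exact (((isRelPrime_X_X (by decide)).pow_left.mul_left (isRelPrime_X_X (by decide))).pow_right)
  have hsub : (r - killX₂X₃ k r) * g₄ k ∈ span {g₁ k, g₂ k, g₃ k a} :=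
    span_mono (by simp [Set.insert_subset_iff]) (mul_g₄_mem_of_mem k (sub_killX₂X₃_mem k r))
  rw [show r * g₄ k = (r - killX₂X₃ k r) * g₄ k + t * (X 0 ^ (a - 1) * X 4 * g₄ k) by
    rw [ht]; ring]
  exact add_mem hsub (mul_mem_left _ _ (mul_g₄_mem_span_g₁_g₂_g₃ k ha))

end DSequence

open DSequence

/-- For `a ≥ 3`, the elements `g₁ = x₂² - x₁x₃`, `g₂ = x₁x₂ - x₀x₃`, `g₃ = x₃ᵃ - x₀^{a-1}x₄`,
`g₄ = x₁² - x₀x₂` form a d-sequence in `k[x₀,...,x₄]`: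
for all `0 ≤ i ≤ 3` and `i + 1 ≤ k ≤ 4`, `((g₁,...,g_i) : g_{i+1} g_k) = ((g₁,...,g_i) : g_k)`. -/
theorem g_is_d_sequence {k : Type*} [Field k] (a : ℕ) (ha : 3 ≤ a)
    (g : Fin 4 → MvPolynomial (Fin 5) k)
    (hg0 : g 0 = X 2 ^ 2 - X 1 * X 3)
    (hg1 : g 1 = X 1 * X 2 - X 0 * X 3)
    (hg2 : g 2 = X 3 ^ a - X 0 ^ (a - 1) * X 4)
    (hg3 : g 3 = X 1 ^ 2 - X 0 * X 2) :
    ∀ i j : Fin 4, i ≤ j →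
      (Ideal.span (g '' {l | l < i})).colon (Ideal.span {g i * g j}) =
        (Ideal.span (g '' {l | l < i})).colon (Ideal.span {g j}) := by
  have hg : g = ![g₁ k, g₂ k, g₃ k a, g₄ k] := by
    funext i
    fin_cases i <;> assumption
  subst hg
  have ha0 : a ≠ 0 := by omega
  intro i j hij
  fin_cases i <;> simp only [Fin.zero_eta, Fin.mk_one, Fin.reduceFinMk] at hij ⊢
  · rw [show {l : Fin 4 | l < 0} = ∅ by ext l; simp, Set.image_empty, Ideal.span_empty]
    exact bot_colon_g₁_mul k _
  · rw [show {l : Fin 4 | l < 1} = {0} by ext l; fin_cases l <;> simp, Set.image_singleton]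
    exact span_g₁_colon_g₂_mul k _
  · rw [show {l : Fin 4 | l < 2} = {0, 1} by ext l; fin_cases l <;> simp, Set.image_pair]
    exact span_g₁_g₂_colon_g₃_mul k ha0 _
  · obtain rfl : j = 3 := by omega
    rw [show {l : Fin 4 | l < 3} = {0, 1, 2} by ext l; fin_cases l <;> simp, Set.image_insert_eq,
      Set.image_pair]
    exact span_g₁_g₂_g₃_colon_g₄_sq k ha0
end

section
/- Let k be a field and a ≥ 3. In R = k[x_0,...,x_4], let I_a = (g_1, g_2, g_3, g_4) where g_1 = x_2^2 - x_1 x_3, g_2 = x_1 x_2 - x_0 x_3, g_3 = x_3^a - x_0^{a-1} x_4, g_4 = x_1^2 - x_0 x_2, and let p_a be the homogeneous defining ideal of the projective monomial curve parametrized by (s^{3a}, s^{3a-1}t, s^{3a-2}t^2, s^{3a-3}t^3, t^{3a}). Then p_a = I_a. -/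
open MvPolynomial

namespace MonCurveAux

/-! ### Generic reduction lemma in a commutative ring -/

section Reduce

variable {Q : Type*} [CommRing Q] {a : ℕ} {y0 y1 y2 y3 y4 : Q}

theorem reduceJ (ha : 1 ≤ a) (h3 : y3^a = y0^(a-1)*y4) :
    ∀ j i ε1 ε2 l : ℕ, ∃ i' j' l', j' < a ∧
      y0^i*y1^ε1*y2^ε2*y3^j*y4^l = y0^i'*y1^ε1*y2^ε2*y3^j'*y4^l' := by
  intro j
  induction j using Nat.strong_induction_on with
  | _ j IH =>
    intro i ε1 ε2 l
    by_cases hj : j < a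
    · exact ⟨i, j, l, hj, rfl⟩
    · obtain ⟨j0, rfl⟩ : ∃ j0, j = j0 + a := ⟨j - a, by omega⟩
      obtain ⟨i', j', l', hlt, heq⟩ := IH j0 (by omega) (i + (a-1)) ε1 ε2 (l+1)
      refine ⟨i', j', l', hlt, ?_⟩
      rw [← heq]
      linear_combination (y0^i*y1^ε1*y2^ε2*y3^j0*y4^l) * h3

theorem reduceE (h1 : y2^2 = y1*y3) (h2 : y1*y2 = y0*y3) (h4 : y1^2 = y0*y2) :
    ∀ n e1 e2 : ℕ, e1 + e2 ≤ n → ∀ i j l : ℕ, ∃ i' ε1 ε2 j', ε1 + ε2 ≤ 1 ∧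
      y0^i*y1^e1*y2^e2*y3^j*y4^l = y0^i'*y1^ε1*y2^ε2*y3^j'*y4^l := by
  intro n
  induction n using Nat.strong_induction_on with
  | _ n IH =>
    intro e1 e2 hn i j l
    rcases Nat.lt_or_ge (e1 + e2) 2 with h | h
    · exact ⟨i, e1, e2, j, by omega, rfl⟩
    · rcases Nat.lt_or_ge e1 2 with he1 | he1
      · rcases Nat.lt_or_ge e1 1 with he0 | he0
        · -- e1 = 0, e2 ≥ 2
          obtain rfl : e1 = 0 := by omega
          obtain ⟨e2', rfl⟩ : ∃ e, e2 = e + 2 := ⟨e2 - 2, by omega⟩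
          obtain ⟨i', ε1, ε2, j', hs, heq⟩ :=
            IH (1 + e2') (by omega) 1 e2' (by omega) i (j+1) l
          refine ⟨i', ε1, ε2, j', hs, ?_⟩
          rw [← heq]
          linear_combination (y0^i*y2^e2'*y3^j*y4^l) * h1
        · -- e1 = 1, e2 ≥ 1
          obtain rfl : e1 = 1 := by omega
          obtain ⟨e2', rfl⟩ : ∃ e, e2 = e + 1 := ⟨e2 - 1, by omega⟩
          obtain ⟨i', ε1, ε2, j', hs, heq⟩ :=
            IH e2' (by omega) 0 e2' (by omega) (i+1) (j+1) l
          refine ⟨i', ε1, ε2, j', hs, ?_⟩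
          rw [← heq]
          linear_combination (y0^i*y2^e2'*y3^j*y4^l) * h2
      · -- e1 ≥ 2
        obtain ⟨e1', rfl⟩ : ∃ e, e1 = e + 2 := ⟨e1 - 2, by omega⟩
        obtain ⟨i', ε1, ε2, j', hs, heq⟩ :=
          IH (e1' + e2 + 1) (by omega) e1' (e2+1) (by omega) (i+1) j l
        refine ⟨i', ε1, ε2, j', hs, ?_⟩
        rw [← heq]
        linear_combination (y0^i*y1^e1'*y2^e2*y3^j*y4^l) * h4

theorem reduce (ha : 1 ≤ a) (h1 : y2^2 = y1*y3) (h2 : y1*y2 = y0*y3)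
    (h3 : y3^a = y0^(a-1)*y4) (h4 : y1^2 = y0*y2) :
    ∀ i e1 e2 j l : ℕ, ∃ i' ε1 ε2 j' l', ε1 + ε2 ≤ 1 ∧ j' < a ∧
      y0^i*y1^e1*y2^e2*y3^j*y4^l = y0^i'*y1^ε1*y2^ε2*y3^j'*y4^l' := by
  intro i e1 e2 j l
  obtain ⟨i', ε1, ε2, j', hs, heq⟩ := reduceE h1 h2 h4 (e1+e2) e1 e2 le_rfl i j l
  obtain ⟨i'', j'', l'', hlt, heq2⟩ := reduceJ ha h3 j' i' ε1 ε2 l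
  exact ⟨i'', ε1, ε2, j'', l'', hs, hlt, heq.trans heq2⟩

end Reduce

/-! ### Monomials and exponent bookkeeping -/

variable {k : Type*} [Field k]

noncomputable def F (k : Type*) [Field k] (a : ℕ) : Fin 5 → MvPolynomial (Fin 2) k :=
  fun i : Fin 5 =>
    if (i : ℕ) = 4 then (X 1 : MvPolynomial (Fin 2) k) ^ (3 * a)
    else (X 0 : MvPolynomial (Fin 2) k) ^ (3 * a - (i : ℕ)) * X 1 ^ (i : ℕ)

theorem F0 (a : ℕ) : aeval (R := k) (F k a) (X 0) = (X 0 : MvPolynomial (Fin 2) k)^(3*a) := by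
  simp [F]
theorem F1 (a : ℕ) :
    aeval (R := k) (F k a) (X 1) = (X 0 : MvPolynomial (Fin 2) k)^(3*a-1) * X 1 := by
  simp [F]
theorem F2 (a : ℕ) :
    aeval (R := k) (F k a) (X 2) = (X 0 : MvPolynomial (Fin 2) k)^(3*a-2) * X 1^2 := by
  simp [F]
theorem F3 (a : ℕ) :
    aeval (R := k) (F k a) (X 3) = (X 0 : MvPolynomial (Fin 2) k)^(3*a-3) * X 1^3 := by
  simp [F, show ((3:Fin 5):ℕ) = 3 from rfl]
theorem F4 (a : ℕ) : aeval (R := k) (F k a) (X 4) = (X 1 : MvPolynomial (Fin 2) k)^(3*a) := by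
  simp [F, show ((4:Fin 5):ℕ) = 4 from rfl]

theorem phi_M (a : ℕ) (i e1 e2 j l : ℕ) :
    aeval (R := k) (F k a) (X 0^i * X 1^e1 * X 2^e2 * X 3^j * X 4^l) =
      (X 0 : MvPolynomial (Fin 2) k)^(3*a*i + (3*a-1)*e1 + (3*a-2)*e2 + (3*a-3)*j)
        * X 1^(e1 + 2*e2 + 3*j + 3*a*l) := by
  simp only [map_mul, map_pow, F0, F1, F2, F3, F4]
  ring

/-- exponent finsupp on 5 variables -/
noncomputable def Efn (i e1 e2 j l : ℕ) : Fin 5 →₀ ℕ :=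
  Finsupp.single 0 i + Finsupp.single 1 e1 + Finsupp.single 2 e2 +
    Finsupp.single 3 j + Finsupp.single 4 l

theorem Efn_apply0 (i e1 e2 j l : ℕ) : Efn i e1 e2 j l 0 = i := by
  simp [Efn, Finsupp.single_apply]
theorem Efn_apply1 (i e1 e2 j l : ℕ) : Efn i e1 e2 j l 1 = e1 := by
  simp [Efn, Finsupp.single_apply]
theorem Efn_apply2 (i e1 e2 j l : ℕ) : Efn i e1 e2 j l 2 = e2 := by
  simp [Efn, Finsupp.single_apply]
theorem Efn_apply3 (i e1 e2 j l : ℕ) : Efn i e1 e2 j l 3 = j := by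
  simp [Efn, Finsupp.single_apply]
theorem Efn_apply4 (i e1 e2 j l : ℕ) : Efn i e1 e2 j l 4 = l := by
  simp [Efn, Finsupp.single_apply]

theorem monomial_eq_prod5 (u : Fin 5 →₀ ℕ) (c : k) :
    (monomial u c : MvPolynomial (Fin 5) k) =
      C c * X 0 ^ (u 0) * X 1 ^ (u 1) * X 2 ^ (u 2) * X 3 ^ (u 3) * X 4 ^ (u 4) := by
  rw [monomial_eq, Finsupp.prod_fintype _ _ (fun i => pow_zero _), Fin.prod_univ_five]
  ring

theorem monomial_Efn (i e1 e2 j l : ℕ) (c : k) :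
    (monomial (Efn i e1 e2 j l) c : MvPolynomial (Fin 5) k) =
      C c * X 0 ^ i * X 1 ^ e1 * X 2 ^ e2 * X 3 ^ j * X 4 ^ l := by
  rw [monomial_eq_prod5, Efn_apply0, Efn_apply1, Efn_apply2, Efn_apply3, Efn_apply4]

/-- exponent finsupp on 2 variables -/
noncomputable def efn (A B : ℕ) : Fin 2 →₀ ℕ := Finsupp.single 0 A + Finsupp.single 1 B

theorem efn_apply0 (A B : ℕ) : efn A B 0 = A := by simp [efn, Finsupp.single_apply]
theorem efn_apply1 (A B : ℕ) : efn A B 1 = B := by simp [efn, Finsupp.single_apply]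

theorem monomial_efn (A B : ℕ) (c : k) :
    (monomial (efn A B) c : MvPolynomial (Fin 2) k) = C c * X 0 ^ A * X 1 ^ B := by
  rw [monomial_eq, Finsupp.prod_fintype _ _ (fun i => pow_zero _), Fin.prod_univ_two,
    efn_apply0, efn_apply1]
  ring

/-- exponents of the image of a standard monomial -/
def Aexp (a i e1 e2 j : ℕ) : ℕ := 3*a*i + (3*a-1)*e1 + (3*a-2)*e2 + (3*a-3)*j
def Bexp (a e1 e2 j l : ℕ) : ℕ := e1 + 2*e2 + 3*j + 3*a*l

theorem phi_monomial_Efn (a : ℕ) (i e1 e2 j l : ℕ) (c : k) :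
    aeval (R := k) (F k a) (monomial (Efn i e1 e2 j l) c) =
      monomial (efn (Aexp a i e1 e2 j) (Bexp a e1 e2 j l)) c := by
  rw [monomial_Efn, monomial_efn]
  simp only [Aexp, Bexp, map_mul, map_pow, aeval_C, algebraMap_eq, F0, F1, F2, F3, F4]
  ring

/-! ### Injectivity of exponents of standard monomials -/

theorem einj {a : ℕ} (ha : 3 ≤ a) {i1 ε11 ε21 j1 l1 i2 ε12 ε22 j2 l2 : ℕ}
    (hs1 : ε11 + ε21 ≤ 1) (hj1 : j1 < a) (hs2 : ε12 + ε22 ≤ 1) (hj2 : j2 < a)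
    (hA : Aexp a i1 ε11 ε21 j1 = Aexp a i2 ε12 ε22 j2)
    (hB : Bexp a ε11 ε21 j1 l1 = Bexp a ε12 ε22 j2 l2) :
    i1 = i2 ∧ ε11 = ε12 ∧ ε21 = ε22 ∧ j1 = j2 ∧ l1 = l2 := by
  simp only [Aexp, Bexp] at hA hB
  have hB' : (ε11 + 2*ε21) + 3*(j1 + a*l1) = (ε12 + 2*ε22) + 3*(j2 + a*l2) := by
    rw [show (ε11 + 2*ε21) + 3*(j1 + a*l1) = ε11 + 2*ε21 + 3*j1 + 3*a*l1 by ring,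
      show (ε12 + 2*ε22) + 3*(j2 + a*l2) = ε12 + 2*ε22 + 3*j2 + 3*a*l2 by ring]
    exact hB
  have hmod : ε11 + 2*ε21 = ε12 + 2*ε22 := by
    have h1 := Nat.add_mul_mod_self_left (ε11 + 2*ε21) 3 (j1 + a*l1)
    have h2 := Nat.add_mul_mod_self_left (ε12 + 2*ε22) 3 (j2 + a*l2)
    rw [show (ε11+2*ε21) + 3*(j1+a*l1) = (ε11+2*ε21) + 3*(j1+a*l1) from rfl] at h1
    omega
  have hε1 : ε11 = ε12 := by omega
  have hε2 : ε21 = ε22 := by omega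
  have hkey : j1 + a*l1 = j2 + a*l2 := by omega
  have hj : j1 = j2 := by
    have e1 : (j1 + a*l1) % a = j1 := by
      rw [Nat.add_mul_mod_self_left]; exact Nat.mod_eq_of_lt hj1
    have e2 : (j2 + a*l2) % a = j2 := by
      rw [Nat.add_mul_mod_self_left]; exact Nat.mod_eq_of_lt hj2
    rw [← e1, ← e2, hkey]
  have hl : l1 = l2 := by
    have : a*l1 = a*l2 := by omega
    exact Nat.eq_of_mul_eq_mul_left (by omega) this
  have hi : i1 = i2 := by
    subst hε1 hε2 hj
    have : 3*a*i1 = 3*a*i2 := by omega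
    exact Nat.eq_of_mul_eq_mul_left (by omega) this
  exact ⟨hi, hε1, hε2, hj, hl⟩

theorem sum_standard_eq_zero {a : ℕ} (ha : 3 ≤ a) (S : Finset (Fin 5 →₀ ℕ))
    (c : (Fin 5 →₀ ℕ) → k) (σ0 σ1 σ2 σ3 σ4 : (Fin 5 →₀ ℕ) → ℕ)
    (hstd : ∀ u ∈ S, σ1 u + σ2 u ≤ 1) (hjlt : ∀ u ∈ S, σ3 u < a)
    (hz : aeval (R := k) (F k a)
        (∑ u ∈ S, monomial (Efn (σ0 u) (σ1 u) (σ2 u) (σ3 u) (σ4 u)) (c u)) = 0) :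
    (∑ u ∈ S, (monomial (Efn (σ0 u) (σ1 u) (σ2 u) (σ3 u) (σ4 u)) (c u)
      : MvPolynomial (Fin 5) k)) = 0 := by
  classical
  have himg : (∑ u ∈ S, (monomial (efn (Aexp a (σ0 u) (σ1 u) (σ2 u) (σ3 u))
      (Bexp a (σ1 u) (σ2 u) (σ3 u) (σ4 u))) (c u) : MvPolynomial (Fin 2) k)) = 0 := by
    rw [← hz, map_sum]
    exact Finset.sum_congr rfl fun u _ => (phi_monomial_Efn a _ _ _ _ _ _).symm
  -- the key iff between exponent equalities
  have comp : ∀ u ∈ S, ∀ u' ∈ S,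
      (Efn (σ0 u) (σ1 u) (σ2 u) (σ3 u) (σ4 u) = Efn (σ0 u') (σ1 u') (σ2 u') (σ3 u') (σ4 u')) ↔
      (efn (Aexp a (σ0 u) (σ1 u) (σ2 u) (σ3 u)) (Bexp a (σ1 u) (σ2 u) (σ3 u) (σ4 u)) =
        efn (Aexp a (σ0 u') (σ1 u') (σ2 u') (σ3 u')) (Bexp a (σ1 u') (σ2 u') (σ3 u') (σ4 u'))) := by
    intro u hu u' hu'
    constructor
    · intro h
      have h0 : σ0 u = σ0 u' := by
        have := DFunLike.congr_fun h (0 : Fin 5); rwa [Efn_apply0, Efn_apply0] at this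
      have h1 : σ1 u = σ1 u' := by
        have := DFunLike.congr_fun h (1 : Fin 5); rwa [Efn_apply1, Efn_apply1] at this
      have h2 : σ2 u = σ2 u' := by
        have := DFunLike.congr_fun h (2 : Fin 5); rwa [Efn_apply2, Efn_apply2] at this
      have h3 : σ3 u = σ3 u' := by
        have := DFunLike.congr_fun h (3 : Fin 5); rwa [Efn_apply3, Efn_apply3] at this
      have h4 : σ4 u = σ4 u' := by
        have := DFunLike.congr_fun h (4 : Fin 5); rwa [Efn_apply4, Efn_apply4] at this
      rw [h0, h1, h2, h3, h4]
    · intro h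
      have hA : Aexp a (σ0 u) (σ1 u) (σ2 u) (σ3 u) = Aexp a (σ0 u') (σ1 u') (σ2 u') (σ3 u') := by
        have := DFunLike.congr_fun h (0 : Fin 2); rwa [efn_apply0, efn_apply0] at this
      have hB : Bexp a (σ1 u) (σ2 u) (σ3 u) (σ4 u) = Bexp a (σ1 u') (σ2 u') (σ3 u') (σ4 u') := by
        have := DFunLike.congr_fun h (1 : Fin 2); rwa [efn_apply1, efn_apply1] at this
      obtain ⟨h0, h1, h2, h3, h4⟩ :=
        einj ha (hstd u hu) (hjlt u hu) (hstd u' hu') (hjlt u' hu') hA hB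
      rw [h0, h1, h2, h3, h4]
  refine MvPolynomial.ext _ _ fun v => ?_
  rw [MvPolynomial.coeff_sum]
  simp only [coeff_monomial, coeff_zero]
  by_cases hv : ∃ u₀ ∈ S, Efn (σ0 u₀) (σ1 u₀) (σ2 u₀) (σ3 u₀) (σ4 u₀) = v
  · obtain ⟨u₀, hu₀S, hu₀⟩ := hv
    subst hu₀
    have hcoeff := congrArg
      (coeff (efn (Aexp a (σ0 u₀) (σ1 u₀) (σ2 u₀) (σ3 u₀))
        (Bexp a (σ1 u₀) (σ2 u₀) (σ3 u₀) (σ4 u₀)))) himg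
    rw [MvPolynomial.coeff_sum, coeff_zero] at hcoeff
    simp only [coeff_monomial] at hcoeff
    have hconv : (∑ u ∈ S, if Efn (σ0 u) (σ1 u) (σ2 u) (σ3 u) (σ4 u) =
          Efn (σ0 u₀) (σ1 u₀) (σ2 u₀) (σ3 u₀) (σ4 u₀) then c u else 0)
        = ∑ u ∈ S, if efn (Aexp a (σ0 u) (σ1 u) (σ2 u) (σ3 u)) (Bexp a (σ1 u) (σ2 u) (σ3 u) (σ4 u))
            = efn (Aexp a (σ0 u₀) (σ1 u₀) (σ2 u₀) (σ3 u₀)) (Bexp a (σ1 u₀) (σ2 u₀) (σ3 u₀) (σ4 u₀))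
          then c u else 0 :=
      Finset.sum_congr rfl fun u hu => if_congr (comp u hu u₀ hu₀S) rfl rfl
    rw [hconv]
    exact hcoeff
  · push_neg at hv
    exact Finset.sum_eq_zero fun u hu => if_neg (hv u hu)

end MonCurveAux

/-- For `a ≥ 3`, the homogeneous defining ideal `p_a` of the projective monomial curve
`(s^{3a}, s^{3a-1}t, s^{3a-2}t², s^{3a-3}t³, t^{3a})`, i.e. the kernel of
`k[x₀,...,x₄] → k[s,t]`, equals `I_a = (g₁, g₂, g₃, g₄)` where `g₁ = x₂² - x₁x₃`,
`g₂ = x₁x₂ - x₀x₃`, `g₃ = x₃ᵃ - x₀^{a-1}x₄`, `g₄ = x₁² - x₀x₂`. -/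
theorem defining_ideal_monomial_curve {k : Type*} [Field k] (a : ℕ) (ha : 3 ≤ a) :
    RingHom.ker (MvPolynomial.aeval (R := k)
        (fun i : Fin 5 =>
          if (i : ℕ) = 4 then (X 1 : MvPolynomial (Fin 2) k) ^ (3 * a)
          else (X 0 : MvPolynomial (Fin 2) k) ^ (3 * a - (i : ℕ)) * X 1 ^ (i : ℕ))).toRingHom =
      Ideal.span {(X 2 : MvPolynomial (Fin 5) k) ^ 2 - X 1 * X 3,
        X 1 * X 2 - X 0 * X 3, X 3 ^ a - X 0 ^ (a - 1) * X 4, X 1 ^ 2 - X 0 * X 2} := by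
  classical
  open MonCurveAux in
  show RingHom.ker (aeval (R := k) (MonCurveAux.F k a)).toRingHom = _
  set Ia : Ideal (MvPolynomial (Fin 5) k) :=
    Ideal.span {(X 2 : MvPolynomial (Fin 5) k) ^ 2 - X 1 * X 3,
      X 1 * X 2 - X 0 * X 3, X 3 ^ a - X 0 ^ (a - 1) * X 4, X 1 ^ 2 - X 0 * X 2} with hIa
  have hspan : Ia ≤ RingHom.ker (aeval (R := k) (MonCurveAux.F k a)).toRingHom := by
    rw [hIa, Ideal.span_le]
    intro p hp
    simp only [Set.mem_insert_iff, Set.mem_singleton_iff] at hp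
    obtain ⟨b, rfl⟩ : ∃ b, a = b + 3 := ⟨a - 3, by omega⟩
    rcases hp with rfl | rfl | rfl | rfl <;>
    · simp only [SetLike.mem_coe, RingHom.mem_ker, AlgHom.toRingHom_eq_coe, RingHom.coe_coe,
        map_sub, map_mul, map_pow, MonCurveAux.F0, MonCurveAux.F1, MonCurveAux.F2,
        MonCurveAux.F3, MonCurveAux.F4]
      simp only [show 3*(b+3) = 3*b + 9 by omega]
      simp only [show 3*b + 9 - 1 = 3*b + 8 by omega, show 3*b + 9 - 2 = 3*b + 7 by omega,
        show 3*b + 9 - 3 = 3*b + 6 by omega, show b + 3 - 1 = b + 2 by omega]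
      ring
  refine le_antisymm (fun f hf => ?_) hspan
  rw [RingHom.mem_ker, AlgHom.toRingHom_eq_coe, RingHom.coe_coe] at hf
  have mem1 : (X 2 : MvPolynomial (Fin 5) k)^2 - X 1 * X 3 ∈ Ia := by
    rw [hIa]; exact Ideal.subset_span (by simp)
  have mem2 : (X 1 : MvPolynomial (Fin 5) k) * X 2 - X 0 * X 3 ∈ Ia := by
    rw [hIa]; exact Ideal.subset_span (by simp)
  have mem3 : (X 3 : MvPolynomial (Fin 5) k)^a - X 0^(a-1) * X 4 ∈ Ia := by
    rw [hIa]; exact Ideal.subset_span (by simp)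
  have mem4 : (X 1 : MvPolynomial (Fin 5) k)^2 - X 0 * X 2 ∈ Ia := by
    rw [hIa]; exact Ideal.subset_span (by simp)
  have q1 : (Ideal.Quotient.mk Ia (X 2))^2 =
      Ideal.Quotient.mk Ia (X 1) * Ideal.Quotient.mk Ia (X 3) := by
    have h := Ideal.Quotient.eq_zero_iff_mem.2 mem1
    rwa [map_sub, map_pow, map_mul, sub_eq_zero] at h
  have q2 : Ideal.Quotient.mk Ia (X 1) * Ideal.Quotient.mk Ia (X 2) =
      Ideal.Quotient.mk Ia (X 0) * Ideal.Quotient.mk Ia (X 3) := by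
    have h := Ideal.Quotient.eq_zero_iff_mem.2 mem2
    rwa [map_sub, map_mul, map_mul, sub_eq_zero] at h
  have q3 : (Ideal.Quotient.mk Ia (X 3))^a =
      (Ideal.Quotient.mk Ia (X 0))^(a-1) * Ideal.Quotient.mk Ia (X 4) := by
    have h := Ideal.Quotient.eq_zero_iff_mem.2 mem3
    rwa [map_sub, map_mul, map_pow, map_pow, sub_eq_zero] at h
  have q4 : (Ideal.Quotient.mk Ia (X 1))^2 =
      Ideal.Quotient.mk Ia (X 0) * Ideal.Quotient.mk Ia (X 2) := by
    have h := Ideal.Quotient.eq_zero_iff_mem.2 mem4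
    rwa [map_sub, map_pow, map_mul, sub_eq_zero] at h
  have red := MonCurveAux.reduce (by omega : 1 ≤ a) q1 q2 q3 q4
  choose n0 n1 n2 n3 n4 hstd hjlt hred using red
  set g : MvPolynomial (Fin 5) k := ∑ u ∈ f.support,
    monomial (MonCurveAux.Efn
      (n0 (u 0) (u 1) (u 2) (u 3) (u 4)) (n1 (u 0) (u 1) (u 2) (u 3) (u 4))
      (n2 (u 0) (u 1) (u 2) (u 3) (u 4)) (n3 (u 0) (u 1) (u 2) (u 3) (u 4))
      (n4 (u 0) (u 1) (u 2) (u 3) (u 4))) (coeff u f) with hg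
  have hfg : f - g ∈ Ia := by
    rw [← Ideal.Quotient.eq_zero_iff_mem, map_sub, sub_eq_zero]
    conv_lhs => rw [f.as_sum]
    rw [hg, map_sum, map_sum]
    refine Finset.sum_congr rfl fun u hu => ?_
    rw [MonCurveAux.monomial_eq_prod5 u, MonCurveAux.monomial_Efn]
    simp only [map_mul, map_pow]
    linear_combination (Ideal.Quotient.mk Ia (C (coeff u f))) *
      hred (u 0) (u 1) (u 2) (u 3) (u 4)
  have hgz : aeval (R := k) (MonCurveAux.F k a) g = 0 := by
    have h1 : aeval (R := k) (MonCurveAux.F k a) (f - g) = 0 := by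
      have h2 := hspan hfg
      rwa [RingHom.mem_ker, AlgHom.toRingHom_eq_coe, RingHom.coe_coe] at h2
    rw [map_sub, hf, zero_sub, neg_eq_zero] at h1
    exact h1
  have hg0 : g = 0 := by
    rw [hg]
    refine MonCurveAux.sum_standard_eq_zero ha f.support (fun u => coeff u f)
      (fun u => n0 (u 0) (u 1) (u 2) (u 3) (u 4)) (fun u => n1 (u 0) (u 1) (u 2) (u 3) (u 4))
      (fun u => n2 (u 0) (u 1) (u 2) (u 3) (u 4)) (fun u => n3 (u 0) (u 1) (u 2) (u 3) (u 4))
      (fun u => n4 (u 0) (u 1) (u 2) (u 3) (u 4))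
      (fun u _ => hstd (u 0) (u 1) (u 2) (u 3) (u 4))
      (fun u _ => hjlt (u 0) (u 1) (u 2) (u 3) (u 4)) ?_
    rw [← hg]
    exact hgz
  rw [hg0, sub_zero] at hfg
  exact hfg
end

section
/- Let R = k[x_0,...,x_4] with a ≥ 3 and g_1 = x_2^2 - x_1 x_3, g_2 = x_1 x_2 - x_0 x_3, g_3 = x_3^a - x_0^{a-1} x_4, g_4 = x_1^2 - x_0 x_2. Then x_0 is a nonzerodivisor on R/(g_1,g_2,g_3,g_4) and x_4 is a nonzerodivisor on R/((g_1,g_2,g_3,g_4) + (x_0)). -/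
/-!
`J` is the ideal of the affine cone over the monomial curve `t ↦ (1 : t : t² : t³ : t^{3a})`,
i.e. the kernel of `x_i ↦ s t^{w_i}` with `w = (0, 1, 2, 3, 3a)`. Modulo the binomials `g_i`
every monomial reduces to a standard one (`m₁ + m₂ ≤ 1`, `m₃ < a`), and distinct standard
monomials have distinct images, so the kernel is exactly `J`. Hence `R/J` embeds into
`k[s, t]`, is a domain, and `x₀ ↦ s` is a nonzerodivisor.

Modulo `x₀` the generator `g₃` becomes `x₃^a`, so `J + (x₀)` is extended from an ideal `I` of
`k[x₀, …, x₃]` and `R/(J + (x₀)) ≅ (k[x₀, …, x₃]/I)[x₄]`, on which `x₄` is a nonzerodivisor.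
-/

open MvPolynomial
open scoped nonZeroDivisors Polynomial

namespace MvPolynomial

variable {σ τ : Type*} (R : Type*) [CommRing R]

noncomputable def binomialIdeal (rel : Set ((σ →₀ ℕ) × (σ →₀ ℕ))) : Ideal (MvPolynomial σ R) :=
  Ideal.span ((fun p => monomial p.1 1 - monomial p.2 1) '' rel)

variable {R}

theorem aeval_monomial_monomial (v : σ → τ →₀ ℕ) (d : σ →₀ ℕ) (r : R) :
    aeval (fun i => monomial (v i) (1 : R)) (monomial d r) =
      monomial (Finsupp.linearCombination ℕ v d) r := by
  rw [aeval_monomial, Finsupp.linearCombination_apply, monomial_finsupp_sum_index]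
  simp [monomial_pow, algebraMap_eq]

theorem coeff_aeval_monomial_monomial {v : σ → τ →₀ ℕ} {S : Set (σ →₀ ℕ)}
    (hv : S.InjOn (Finsupp.linearCombination ℕ v)) {f : MvPolynomial σ R}
    (hf : f ∈ restrictSupport R S) {d : σ →₀ ℕ} (hd : d ∈ S) :
    coeff (Finsupp.linearCombination ℕ v d) (aeval (fun i => monomial (v i) (1 : R)) f) =
      coeff d f := by
  classical
  conv_lhs => rw [f.as_sum]
  simp only [map_sum, aeval_monomial_monomial, coeff_sum, coeff_monomial]
  rw [Finset.sum_eq_single (s := f.support) d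
    (fun u hu hud => if_neg fun h => hud (hv (hf hu) hd h))
    (fun hd' => by rw [notMem_support_iff.1 hd', ite_self]), if_pos rfl]

theorem eq_zero_of_aeval_monomial_monomial_eq_zero {v : σ → τ →₀ ℕ} {S : Set (σ →₀ ℕ)}
    (hv : S.InjOn (Finsupp.linearCombination ℕ v)) {f : MvPolynomial σ R}
    (hf : f ∈ restrictSupport R S) (h : aeval (fun i => monomial (v i) (1 : R)) f = 0) :
    f = 0 := by
  ext d
  by_cases hd : d ∈ S
  · rw [← coeff_aeval_monomial_monomial hv hf hd, h, coeff_zero, coeff_zero]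
  · rw [coeff_zero]
    exact notMem_support_iff.1 fun hd' => hd (hf hd')

theorem restrictSupport_sup_binomialIdeal_eq_top {S : Set (σ →₀ ℕ)}
    {rel : Set ((σ →₀ ℕ) × (σ →₀ ℕ))} (wt : (σ →₀ ℕ) → ℕ)
    (hred : ∀ m ∉ S, ∃ p ∈ rel, p.1 ≤ m ∧ wt (m - p.1 + p.2) < wt m) :
    restrictSupport R S ⊔ (binomialIdeal R rel).restrictScalars R = ⊤ := by
  set M := restrictSupport R S ⊔ (binomialIdeal R rel).restrictScalars R
  have hmon : ∀ m, monomial m (1 : R) ∈ M := by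
    intro m
    induction h : wt m using Nat.strong_induction_on generalizing m with
    | _ n ih =>
    by_cases hm : m ∈ S
    · exact Submodule.mem_sup_left (by simp [hm])
    obtain ⟨p, hp, hle, hlt⟩ := hred m hm
    have hsplit : monomial m (1 : R) =
        monomial (m - p.1) 1 * (monomial p.1 1 - monomial p.2 1) +
          monomial (m - p.1 + p.2) 1 := by
      rw [mul_sub, monomial_mul, monomial_mul, tsub_add_cancel_of_le hle, one_mul,
        sub_add_cancel]
    rw [hsplit]
    refine add_mem (Submodule.mem_sup_right ?_) (ih _ (h ▸ hlt) _ rfl)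
    exact Ideal.mul_mem_left _ _ (Ideal.subset_span ⟨p, hp, rfl⟩)
  refine eq_top_iff.2 fun f _ => ?_
  rw [f.as_sum]
  refine Submodule.sum_mem _ fun m _ => ?_
  rw [← mul_one (coeff m f), ← smul_eq_mul, ← smul_monomial]
  exact Submodule.smul_mem _ _ (hmon m)

theorem ker_aeval_monomial_monomial {v : σ → τ →₀ ℕ} {S : Set (σ →₀ ℕ)}
    {rel : Set ((σ →₀ ℕ) × (σ →₀ ℕ))} (hv : S.InjOn (Finsupp.linearCombination ℕ v))
    (hrel : ∀ p ∈ rel, Finsupp.linearCombination ℕ v p.1 = Finsupp.linearCombination ℕ v p.2)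
    (wt : (σ →₀ ℕ) → ℕ) (hred : ∀ m ∉ S, ∃ p ∈ rel, p.1 ≤ m ∧ wt (m - p.1 + p.2) < wt m) :
    RingHom.ker (aeval (fun i => monomial (v i) (1 : R))) = binomialIdeal R rel := by
  have hle : binomialIdeal R rel ≤ RingHom.ker (aeval (fun i => monomial (v i) (1 : R))) := by
    refine Ideal.span_le.2 ?_
    rintro _ ⟨p, hp, rfl⟩
    rw [SetLike.mem_coe, RingHom.mem_ker, map_sub, aeval_monomial_monomial,
      aeval_monomial_monomial, hrel p hp, sub_self]
  refine le_antisymm (fun f hf => ?_) hle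
  obtain ⟨n, hn, j, hj, rfl⟩ :=
    Submodule.mem_sup.1 ((restrictSupport_sup_binomialIdeal_eq_top wt hred).ge
      (Submodule.mem_top (x := f)))
  rw [RingHom.mem_ker, map_add, RingHom.mem_ker.1 (hle hj), add_zero] at hf
  rw [eq_zero_of_aeval_monomial_monomial_eq_zero hv hn hf, zero_add]
  exact hj

end MvPolynomial

theorem Ideal.Quotient.mk_mem_nonZeroDivisors_of_ringEquiv {A B : Type*} [CommRing A]
    [CommRing B] (e : A ≃+* B) (I : Ideal A) {x : A}
    (hx : Ideal.Quotient.mk (I.map e) (e x) ∈ (B ⧸ I.map e)⁰) :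
    Ideal.Quotient.mk I x ∈ (A ⧸ I)⁰ := by
  rw [← MulEquivClass.map_nonZeroDivisors
    (Ideal.quotientEquiv I (I.map e) e (Ideal.map_coe e I).symm).symm]
  exact ⟨_, hx, by simp⟩

theorem Polynomial.mk_X_mem_nonZeroDivisors_map_C {B : Type*} [CommRing B] (I : Ideal B) :
    Ideal.Quotient.mk (I.map Polynomial.C) Polynomial.X ∈ (B[X] ⧸ I.map Polynomial.C)⁰ := by
  rw [← MulEquivClass.map_nonZeroDivisors I.polynomialQuotientEquivQuotientPolynomial]
  refine ⟨Polynomial.X, Polynomial.X_mem_nonzeroDivisors, ?_⟩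
  simpa using I.polynomialQuotientEquivQuotientPolynomial_map_mk Polynomial.X

theorem MvPolynomial.mk_X_last_mem_nonZeroDivisors_map_rename {R : Type*} [CommRing R] {n : ℕ}
    (I : Ideal (MvPolynomial (Fin n) R)) :
    Ideal.Quotient.mk (I.map (rename Fin.castSucc)) (X (Fin.last n)) ∈
      (MvPolynomial (Fin (n + 1)) R ⧸ I.map (rename Fin.castSucc))⁰ := by
  let e := (renameEquiv R finSuccEquivLast).trans (optionEquivLeft R (Fin n))
  have hC : (e : MvPolynomial (Fin (n + 1)) R →+* _).comp (rename Fin.castSucc).toRingHom =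
      Polynomial.C := by
    ext <;> simp [e, finSuccEquivLast_castSucc, optionEquivLeft_X_some]
  have hI : (I.map (rename Fin.castSucc)).map e.toRingEquiv = I.map Polynomial.C := by
    rw [← Ideal.map_coe e.toRingEquiv, ← Ideal.map_coe (rename Fin.castSucc), Ideal.map_map]
    exact congrArg (I.map ·) hC
  have hX : e.toRingEquiv (X (Fin.last n)) = Polynomial.X := by
    simp [e, finSuccEquivLast_last, optionEquivLeft_X_none]
  refine Ideal.Quotient.mk_mem_nonZeroDivisors_of_ringEquiv e.toRingEquiv _ ?_
  rw [hI, hX]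
  exact Polynomial.mk_X_mem_nonZeroDivisors_map_C I

section MonomialCurve

variable (R : Type*) [CommRing R] (a : ℕ)

noncomputable def monomialCurveIdeal : Ideal (MvPolynomial (Fin 5) R) :=
  Ideal.span {X 2 ^ 2 - X 1 * X 3, X 1 * X 2 - X 0 * X 3, X 3 ^ a - X 0 ^ (a - 1) * X 4,
    X 1 ^ 2 - X 0 * X 2}

noncomputable def curveExponent (i : Fin 5) : Fin 2 →₀ ℕ :=
  Finsupp.single 0 1 + Finsupp.single 1 (![0, 1, 2, 3, 3 * a] i)

def standardMonomials : Set (Fin 5 →₀ ℕ) := {m | m 1 + m 2 ≤ 1 ∧ m 3 < a}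

def curveRelations : Set ((Fin 5 →₀ ℕ) × (Fin 5 →₀ ℕ)) :=
  {(.single 2 2, .single 1 1 + .single 3 1),
    (.single 1 1 + .single 2 1, .single 0 1 + .single 3 1),
    (.single 3 a, .single 0 (a - 1) + .single 4 1),
    (.single 1 2, .single 0 1 + .single 2 1)}

theorem linearCombination_curveExponent (m : Fin 5 →₀ ℕ) :
    Finsupp.linearCombination ℕ (curveExponent a) m =
      Finsupp.single 0 (m 0 + m 1 + m 2 + m 3 + m 4) +
        Finsupp.single 1 (m 1 + 2 * m 2 + 3 * m 3 + 3 * a * m 4) := by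
  ext j
  fin_cases j <;>
    simp [Finsupp.linearCombination_apply, Finsupp.sum_fintype, Fin.sum_univ_five, curveExponent,
      mul_comm]

theorem binomialIdeal_curveRelations :
    binomialIdeal R (curveRelations a) = monomialCurveIdeal R a := by
  simp only [binomialIdeal, monomialCurveIdeal, curveRelations, Set.image_insert_eq,
    Set.image_singleton, X, monomial_mul, monomial_pow, Finsupp.smul_single, smul_eq_mul,
    mul_one, one_pow]

variable {R a}

theorem injOn_curveExponent :
    (standardMonomials a).InjOn (Finsupp.linearCombination ℕ (curveExponent a)) := by
  rintro m ⟨h12, h3⟩ m' ⟨h12', h3'⟩ h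
  simp only [linearCombination_curveExponent] at h
  have hdeg : m 0 + m 1 + m 2 + m 3 + m 4 = m' 0 + m' 1 + m' 2 + m' 3 + m' 4 := by
    simpa using congrArg (· 0) h
  have hwt : m 1 + 2 * m 2 + 3 * m 3 + 3 * a * m 4 =
      m' 1 + 2 * m' 2 + 3 * m' 3 + 3 * a * m' 4 := by
    simpa using congrArg (· 1) h
  have h3a : 0 < 3 * a := by omega
  have h4 : m 4 = m' 4 := by
    have := congrArg (· / (3 * a)) hwt
    rwa [Nat.add_mul_div_left _ _ h3a, Nat.add_mul_div_left _ _ h3a,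
      Nat.div_eq_of_lt (show m 1 + 2 * m 2 + 3 * m 3 < 3 * a by omega),
      Nat.div_eq_of_lt (show m' 1 + 2 * m' 2 + 3 * m' 3 < 3 * a by omega), zero_add,
      zero_add] at this
  rw [h4] at hdeg hwt
  ext i
  fin_cases i <;> simp only [Fin.isValue, Fin.zero_eta, Fin.mk_one, Fin.reduceFinMk] <;> omega

theorem linearCombination_curveExponent_eq_of_mem_curveRelations (ha : 0 < a) :
    ∀ p ∈ curveRelations a, Finsupp.linearCombination ℕ (curveExponent a) p.1 =
      Finsupp.linearCombination ℕ (curveExponent a) p.2 := by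
  simp only [curveRelations, Set.mem_insert_iff, Set.mem_singleton_iff]
  rintro p (rfl | rfl | rfl | rfl) <;>
  · rw [linearCombination_curveExponent, linearCombination_curveExponent]
    congr 2 <;> simp only [Finsupp.coe_add, Pi.add_apply, Finsupp.single_apply, Fin.reduceEq,
      ↓reduceIte] <;> omega

theorem exists_curveRelations_reduce (ha : 0 < a) {m : Fin 5 →₀ ℕ}
    (hm : m ∉ standardMonomials a) :
    ∃ p ∈ curveRelations a, p.1 ≤ m ∧
      2 * (m - p.1 + p.2) 1 + 2 * (m - p.1 + p.2) 2 + (m - p.1 + p.2) 3 <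
        2 * m 1 + 2 * m 2 + m 3 := by
  simp only [standardMonomials, Set.mem_ofPred_eq, not_and_or, not_le, not_lt] at hm
  simp only [curveRelations, Set.mem_insert_iff, Set.mem_singleton_iff, exists_eq_or_imp,
    exists_eq_left, Finsupp.le_def, Fin.forall_fin_succ, IsEmpty.forall_iff, Finsupp.coe_add,
    Finsupp.coe_tsub, Pi.add_apply, Pi.sub_apply, Finsupp.single_apply, Fin.succ_zero_eq_one,
    Fin.succ_one_eq_two, Fin.reduceSucc, Fin.reduceEq, ↓reduceIte, and_true]
  omega

theorem ker_aeval_curveExponent (ha : 0 < a) :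
    RingHom.ker (aeval (fun i => monomial (curveExponent a i) (1 : R))) =
      monomialCurveIdeal R a := by
  rw [← binomialIdeal_curveRelations]
  exact ker_aeval_monomial_monomial injOn_curveExponent
    (linearCombination_curveExponent_eq_of_mem_curveRelations ha)
    (fun m => 2 * m 1 + 2 * m 2 + m 3) (fun _ hm => exists_curveRelations_reduce ha hm)

theorem monomialCurveIdeal_isPrime [IsDomain R] (ha : 0 < a) :
    (monomialCurveIdeal R a).IsPrime := by
  rw [← ker_aeval_curveExponent ha]
  exact RingHom.ker_isPrime _

theorem X_zero_notMem_monomialCurveIdeal [Nontrivial R] (ha : 0 < a) :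
    X 0 ∉ monomialCurveIdeal R a := by
  rw [← ker_aeval_curveExponent ha, RingHom.mem_ker, aeval_X, monomial_eq_zero]
  exact one_ne_zero

theorem monomialCurveIdeal_sup_span_X_zero (ha : 2 ≤ a) :
    monomialCurveIdeal R a ⊔ Ideal.span {X 0} =
      Ideal.map (rename Fin.castSucc) (Ideal.span {(X 2 : MvPolynomial (Fin 4) R) ^ 2 - X 1 * X 3,
        X 1 * X 2 - X 0 * X 3, X 3 ^ a, X 1 ^ 2 - X 0 * X 2, X 0}) := by
  have hg3 : (X 3 ^ a - X 0 ^ (a - 1) * X 4 : MvPolynomial (Fin 5) R) =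
      X 3 ^ a + -(X 0 ^ (a - 2) * X 4) * X 0 := by
    rw [show a - 1 = a - 2 + 1 by omega, pow_succ]
    ring
  have hpair : Ideal.span {X 3 ^ a - X 0 ^ (a - 1) * X 4, X 0} =
      Ideal.span {(X 3 : MvPolynomial (Fin 5) R) ^ a, X 0} := by
    rw [hg3, Ideal.span_pair_add_mul_right]
  calc
    _ = Ideal.span {(X 2 : MvPolynomial (Fin 5) R) ^ 2 - X 1 * X 3,
          X 1 * X 2 - X 0 * X 3, X 3 ^ a, X 1 ^ 2 - X 0 * X 2, X 0} := by
      have hswap : ∀ A B C C' D E : Ideal (MvPolynomial (Fin 5) R), C ⊔ E = C' ⊔ E →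
          A ⊔ (B ⊔ (C ⊔ D)) ⊔ E = A ⊔ (B ⊔ (C' ⊔ (D ⊔ E))) := fun A B C C' D E h => by
        rw [show A ⊔ (B ⊔ (C ⊔ D)) ⊔ E = A ⊔ B ⊔ D ⊔ (C ⊔ E) by ac_rfl, h]
        ac_rfl
      simp only [monomialCurveIdeal, Ideal.span_insert] at hpair ⊢
      exact hswap _ _ _ _ _ _ hpair
    _ = _ := by
      simp only [Ideal.map_span, Set.image_insert_eq, Set.image_singleton, map_sub, map_mul,
        map_pow, rename_X]
      rfl

end MonomialCurve

/-- For `a ≥ 3` and `J = (g₁,g₂,g₃,g₄)` in `R = k[x₀,...,x₄]`, `x₀` is a nonzerodivisor on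
`R/J` and `x₄` is a nonzerodivisor on `R/(J + (x₀))`. -/
theorem x0_x4_nonzerodivisors {k : Type*} [Field k] (a : ℕ) (ha : 3 ≤ a)
    (J : Ideal (MvPolynomial (Fin 5) k))
    (hJ : J = Ideal.span {(X 2 : MvPolynomial (Fin 5) k) ^ 2 - X 1 * X 3,
        X 1 * X 2 - X 0 * X 3, X 3 ^ a - X 0 ^ (a - 1) * X 4, X 1 ^ 2 - X 0 * X 2}) :
    Ideal.Quotient.mk J (X 0) ∈ nonZeroDivisors (MvPolynomial (Fin 5) k ⧸ J) ∧
      Ideal.Quotient.mk (J ⊔ Ideal.span {(X 0 : MvPolynomial (Fin 5) k)}) (X 4) ∈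
        nonZeroDivisors (MvPolynomial (Fin 5) k ⧸
          (J ⊔ Ideal.span {(X 0 : MvPolynomial (Fin 5) k)})) := by
  obtain rfl : J = monomialCurveIdeal k a := hJ
  refine ⟨?_, ?_⟩
  · have := monomialCurveIdeal_isPrime (R := k) (a := a) (by omega)
    refine mem_nonZeroDivisors_of_ne_zero ?_
    rw [Ne, Ideal.Quotient.eq_zero_iff_mem]
    exact X_zero_notMem_monomialCurveIdeal (by omega)
  · rw [monomialCurveIdeal_sup_span_X_zero (by omega)]
    exact mk_X_last_mem_nonZeroDivisors_map_rename _
end
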